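/- For every integer k ≥ 2, the linear inequality ∑_{v ∈ [k]_0 ∪ [k]_2} (k−1) x_v + ∑_{v ∈ [k]_1} (k−2) x_v ≤ k(k−1) is valid for STAB(H_k). -/
import Mathlib


open Finset

noncomputable section

/-- `cone(P)`: the homogenization of `P`, indexed by `Option V` with `none` playing
the role of the `0` coordinate. -/
def lsCone {V : Type*} (P : Set (V → ℝ)) : Set (Option V → ℝ) :=
  {y | ∃ (lam : ℝ) (x : V → ℝ), 0 ≤ lam ∧ x ∈ P ∧
    y = fun o => o.elim lam (fun v => lam * x v)}

/-- The lift `LŜ₊(P)`: symmetric PSD matrices `Y` indexed by `Option V`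
with `Y e₀ = diag Y` and all columns conditions. -/
def lsLift {V : Type*} [Fintype V] [DecidableEq V] (P : Set (V → ℝ)) :
    Set (Matrix (Option V) (Option V) ℝ) :=
  {Y | Y.PosSemidef ∧ Y.mulVec (Pi.single none 1) = Matrix.diag Y ∧
      ∀ v : V, Y.mulVec (Pi.single (some v) 1) ∈ lsCone P ∧
        Y.mulVec (Pi.single none 1 - Pi.single (some v) 1) ∈ lsCone P}

/-- The Lovász–Schrijver operator `LS₊`. -/
def lsPlus {V : Type*} [Fintype V] [DecidableEq V] (P : Set (V → ℝ)) : Set (V → ℝ) :=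
  {x | ∃ Y ∈ lsLift P, Y.mulVec (Pi.single none 1) = fun o => o.elim 1 x}

/-- The fractional stable set polytope. -/
def FRAC {V : Type*} (G : SimpleGraph V) : Set (V → ℝ) :=
  {x | (∀ v, 0 ≤ x v ∧ x v ≤ 1) ∧ ∀ u v, G.Adj u v → x u + x v ≤ 1}

/-- The stable set polytope: convex hull of incidence vectors of stable sets. -/
def STAB {V : Type*} (G : SimpleGraph V) : Set (V → ℝ) :=
  convexHull ℝ {x | ∃ S : Set V, (∀ u ∈ S, ∀ v ∈ S, ¬ G.Adj u v) ∧
    x = S.indicator fun _ => (1 : ℝ)}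

/-- The graph `H_k`, on vertex set `Fin k × Fin 3` (vertex `i_p` is `(i, p)`). -/
def Hgraph (k : ℕ) : SimpleGraph (Fin k × Fin 3) :=
  SimpleGraph.fromRel (fun a b =>
    (a.1 = b.1 ∧ ((a.2 = 0 ∧ b.2 = 1) ∨ (a.2 = 1 ∧ b.2 = 2))) ∨
    (a.1 ≠ b.1 ∧ a.2 = 0 ∧ b.2 = 2))

lemma Hadj_01 {k : ℕ} (i : Fin k) : (Hgraph k).Adj (i, 0) (i, 1) := by
  rw [Hgraph, SimpleGraph.fromRel_adj]
  exact ⟨by simp, Or.inl (Or.inl ⟨rfl, Or.inl ⟨rfl, rfl⟩⟩)⟩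

lemma Hadj_12 {k : ℕ} (i : Fin k) : (Hgraph k).Adj (i, 1) (i, 2) := by
  rw [Hgraph, SimpleGraph.fromRel_adj]
  exact ⟨by simp, Or.inl (Or.inl ⟨rfl, Or.inr ⟨rfl, rfl⟩⟩)⟩

lemma Hadj_02 {k : ℕ} {i j : Fin k} (h : i ≠ j) : (Hgraph k).Adj (i, 0) (j, 2) := by
  rw [Hgraph, SimpleGraph.fromRel_adj]
  exact ⟨by simp [h], Or.inl (Or.inr ⟨h, rfl, rfl⟩)⟩

open Classical in
lemma Hk_stable_bound (k : ℕ) (hk : 2 ≤ k) (S : Set (Fin k × Fin 3))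
    (hS : ∀ u ∈ S, ∀ v ∈ S, ¬ (Hgraph k).Adj u v) :
    ∑ v : Fin k × Fin 3, (if v.2 = 1 then (k : ℝ) - 2 else (k : ℝ) - 1) *
      S.indicator (fun _ => (1 : ℝ)) v ≤ (k : ℝ) * ((k : ℝ) - 1) := by
  set e : Fin k × Fin 3 → ℝ := S.indicator (fun _ => (1 : ℝ)) with he
  have hkR : (2 : ℝ) ≤ (k : ℝ) := by exact_mod_cast hk
  have he0 : ∀ v, 0 ≤ e v := fun v => Set.indicator_nonneg (fun _ _ => zero_le_one) v
  have he1 : ∀ v, e v ≤ 1 := fun v => Set.indicator_le_self' (fun _ _ => zero_le_one) v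
  have heo : ∀ v, v ∉ S → e v = 0 := fun v hv => Set.indicator_of_notMem hv _
  have hrow : ∑ v : Fin k × Fin 3, (if v.2 = 1 then (k : ℝ) - 2 else (k : ℝ) - 1) * e v
      = ∑ i : Fin k, (((k:ℝ)-1) * e (i,0) + ((k:ℝ)-2) * e (i,1) + ((k:ℝ)-1) * e (i,2)) := by
    rw [Fintype.sum_prod_type]
    refine Finset.sum_congr rfl fun i _ => ?_
    rw [Fin.sum_univ_three]
    norm_num [Fin.ext_iff]
  rw [hrow]
  by_cases hA : ∃ i, (i, (0 : Fin 3)) ∈ S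
  · obtain ⟨i₀, hi₀⟩ := hA
    have h1 : e (i₀, 1) = 0 := heo _ (fun h => hS _ hi₀ _ h (Hadj_01 i₀))
    by_cases hC : (i₀, (2 : Fin 3)) ∈ S
    · -- case 2b
      have hsum := Finset.add_sum_erase Finset.univ
        (fun i => (((k:ℝ)-1) * e (i,0) + ((k:ℝ)-2) * e (i,1) + ((k:ℝ)-1) * e (i,2)))
        (Finset.mem_univ i₀)
      rw [← hsum]
      have hrest : ∑ j ∈ Finset.univ.erase i₀,
          (((k:ℝ)-1) * e (j,0) + ((k:ℝ)-2) * e (j,1) + ((k:ℝ)-1) * e (j,2))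
          ≤ ∑ _j ∈ Finset.univ.erase i₀, ((k:ℝ)-2) := by
        refine Finset.sum_le_sum fun j hj => ?_
        have hjne : j ≠ i₀ := Finset.ne_of_mem_erase hj
        have hj0 : e (j, 0) = 0 := heo _ (fun h => hS _ h _ hC (Hadj_02 hjne))
        have hj2 : e (j, 2) = 0 := heo _ (fun h => hS _ hi₀ _ h (Hadj_02 (Ne.symm hjne)))
        have := he1 (j, 1); have := he0 (j, 1)
        rw [hj0, hj2]
        nlinarith
      have hcard : ((Finset.univ.erase i₀).card : ℝ) = (k : ℝ) - 1 := by
        rw [Finset.card_erase_of_mem (Finset.mem_univ i₀)]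
        simp only [Finset.card_univ, Fintype.card_fin]
        have : 1 ≤ k := by omega
        push_cast [Nat.cast_sub this]
        ring
      rw [Finset.sum_const, nsmul_eq_mul, hcard] at hrest
      have h00 := he1 (i₀, 0); have h02 := he1 (i₀, 2)
      rw [h1]
      nlinarith
    · -- case 2a
      have key : ∀ j : Fin k,
          ((k:ℝ)-1) * e (j,0) + ((k:ℝ)-2) * e (j,1) + ((k:ℝ)-1) * e (j,2) ≤ (k:ℝ)-1 := by
        intro j
        by_cases hj : j = i₀
        · subst hj
          have h2 : e (j, 2) = 0 := heo _ hC
          have := he1 (j, 0)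
          rw [h1, h2]; nlinarith
        · have hj2 : e (j, 2) = 0 := heo _ (fun h => hS _ hi₀ _ h (Hadj_02 (Ne.symm hj)))
          rw [hj2]
          by_cases hj1 : (j, (1:Fin 3)) ∈ S
          · have hj0 : e (j, 0) = 0 := heo _ (fun h => hS _ h _ hj1 (Hadj_01 j))
            have := he1 (j, 1)
            rw [hj0]; nlinarith
          · have := he1 (j, 0); have := heo _ hj1
            nlinarith [he0 (j,0)]
      calc ∑ i : Fin k, (((k:ℝ)-1) * e (i,0) + ((k:ℝ)-2) * e (i,1) + ((k:ℝ)-1) * e (i,2))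
          ≤ ∑ _i : Fin k, ((k:ℝ)-1) := Finset.sum_le_sum fun i _ => key i
        _ = (k:ℝ) * ((k:ℝ)-1) := by
            rw [Finset.sum_const, nsmul_eq_mul]; simp
  · push_neg at hA
    have key : ∀ j : Fin k,
        ((k:ℝ)-1) * e (j,0) + ((k:ℝ)-2) * e (j,1) + ((k:ℝ)-1) * e (j,2) ≤ (k:ℝ)-1 := by
      intro j
      have hj0 : e (j, 0) = 0 := heo _ (hA j)
      rw [hj0]
      by_cases hj1 : (j, (1:Fin 3)) ∈ S
      · have hj2 : e (j, 2) = 0 := heo _ (fun h => hS _ hj1 _ h (Hadj_12 j))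
        have := he1 (j, 1)
        rw [hj2]; nlinarith
      · have := heo _ hj1; have := he1 (j, 2)
        nlinarith [he0 (j,2)]
    calc ∑ i : Fin k, (((k:ℝ)-1) * e (i,0) + ((k:ℝ)-2) * e (i,1) + ((k:ℝ)-1) * e (i,2))
        ≤ ∑ _i : Fin k, ((k:ℝ)-1) := Finset.sum_le_sum fun i _ => key i
      _ = (k:ℝ) * ((k:ℝ)-1) := by rw [Finset.sum_const, nsmul_eq_mul]; simp

/-- The vector `w_k(a,b)`: entry `a` on `[k]₀ ∪ [k]₂` and `b` on `[k]₁`. -/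
def wVec (k : ℕ) (a b : ℝ) : Fin k × Fin 3 → ℝ := fun v => if v.2 = 1 then b else a

theorem Hk_valid_ineq (k : ℕ) (hk : 2 ≤ k) :
    ∀ x ∈ STAB (Hgraph k),
      ∑ v : Fin k × Fin 3, (if v.2 = 1 then (k : ℝ) - 2 else (k : ℝ) - 1) * x v
        ≤ (k : ℝ) * ((k : ℝ) - 1) := by
  intro x hx
  have hlin : IsLinearMap ℝ (fun x : Fin k × Fin 3 → ℝ =>
      ∑ v : Fin k × Fin 3, (if v.2 = 1 then (k : ℝ) - 2 else (k : ℝ) - 1) * x v) := by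
    constructor
    · intro a b; simp [mul_add, Finset.sum_add_distrib]
    · intro c a
      simp only [Pi.smul_apply, smul_eq_mul, Finset.mul_sum]
      exact Finset.sum_congr rfl fun v _ => by ring
  have hconv : Convex ℝ {x : Fin k × Fin 3 → ℝ |
      ∑ v : Fin k × Fin 3, (if v.2 = 1 then (k : ℝ) - 2 else (k : ℝ) - 1) * x v
        ≤ (k : ℝ) * ((k : ℝ) - 1)} := convex_halfSpace_le hlin _
  refine convexHull_min ?_ hconv hx
  rintro y ⟨S, hS, rfl⟩
  exact Hk_stable_bound k hk S hS
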